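/- Let n be a positive integer, k a non-negative integer with k ≤ n, m a non-negative integer, and d = gcd(m, n). Then ∑_{b=1}^{n} N_n(k,b) · exp(2πi·bm/n) = (−1)^{k + kd/n} · k! · binom(d, kd/n) if n divides kd, and this sum equals 0 if n does not divide kd, where N_n(k,b) is the number of tuples ⟨x_1, ..., x_k⟩ ∈ (Z/nZ)^k with x_1 + ... + x_k ≡ b (mod n) and all coordinates pairwise distinct. -/

import Mathlib

open Finset Polynomial

-- periodic product collapse
lemma aux_periodic_prod {M : Type*} [CommMonoid M] (g : ℕ → M) (q d : ℕ)
    (hper : ∀ j, g (j + q) = g j) :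
    ∏ j ∈ Finset.range (q * d), g j = (∏ j ∈ Finset.range q, g j) ^ d := by
  have hshift : ∀ d i, g (q * d + i) = g i := by
    intro d i
    induction d with
    | zero => simp
    | succ d ih2 =>
      have : q * (d+1) + i = (q * d + i) + q := by ring
      rw [this, hper, ih2]
  induction d with
  | zero => simp
  | succ d ih =>
    rw [Nat.mul_succ, Finset.prod_range_add, ih, pow_succ]
    congr 1
    exact Finset.prod_congr rfl fun i _ => hshift d i

-- coefficient of product of (1 + c_a X)
lemma aux_coeff_prod_one_add {ι : Type*} [DecidableEq ι] (u : Finset ι) (f : ι → ℂ) (k : ℕ) :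
    (∏ a ∈ u, (1 + Polynomial.C (f a) * Polynomial.X)).coeff k
      = ∑ s ∈ u.powersetCard k, ∏ a ∈ s, f a := by
  have h : ∏ a ∈ u, (1 + Polynomial.C (f a) * Polynomial.X)
      = ∑ t ∈ u.powerset, Polynomial.C (∏ a ∈ t, f a) * Polynomial.X ^ t.card := by
    have := Finset.prod_add (fun a => Polynomial.C (f a) * Polynomial.X)
      (fun _ => (1 : ℂ[X])) u
    simp only [Finset.prod_const_one, mul_one] at this
    rw [show (fun a => (1 : ℂ[X]) + Polynomial.C (f a) * Polynomial.X)
        = (fun a => Polynomial.C (f a) * Polynomial.X + 1) from by funext a; ring] at *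
    rw [this]
    refine Finset.sum_congr rfl fun t _ => ?_
    rw [Finset.prod_mul_distrib, Finset.prod_const, ← map_prod]
  rw [h, Polynomial.finset_sum_coeff]
  simp only [Polynomial.coeff_C_mul, Polynomial.coeff_X_pow, mul_ite, mul_one, mul_zero]
  rw [Finset.powersetCard_eq_filter, Finset.sum_filter]
  refine Finset.sum_congr rfl fun t _ => ?_
  by_cases hc : t.card = k
  · simp [hc]
  · rw [if_neg hc, if_neg (fun h => hc h.symm)]

-- the product over a full period
lemma aux_prod_primroot (q : ℕ) (hq : 0 < q) (ω : ℂ) (hω : IsPrimitiveRoot ω q) :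
    ∏ j ∈ Finset.range q, (1 + Polynomial.C (ω ^ j) * Polynomial.X)
      = 1 - Polynomial.C ((-1 : ℂ) ^ q) * Polynomial.X ^ q := by
  have hXq : (Polynomial.X ^ q - Polynomial.C (1 : ℂ))
      = ∏ j ∈ Finset.range q, (Polynomial.X - Polynomial.C (ω ^ j)) := by
    have hm : (Polynomial.X ^ q - Polynomial.C (1 : ℂ)).Monic :=
      Polynomial.monic_X_pow_sub_C _ hq.ne'
    have hs := (IsAlgClosed.splits _).eq_prod_roots_of_monic
      hm
    have hroots : (Polynomial.X ^ q - Polynomial.C (1 : ℂ)).roots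
        = (Multiset.range q).map (fun j => ω ^ j * 1) := hω.nthRoots_eq (one_pow q)
    rw [hs, hroots, Multiset.map_map]
    rw [Finset.prod_eq_multiset_prod, Finset.range_val]
    simp
  have heval : ∀ z : ℂ, z ^ q - 1 = ∏ j ∈ Finset.range q, (z - ω ^ j) := by
    intro z
    have := congrArg (Polynomial.eval z) hXq
    simpa [Polynomial.eval_prod] using this
  have hfun : ∀ z : ℂ, ∏ j ∈ Finset.range q, (1 + ω ^ j * z) = 1 - (-1 : ℂ) ^ q * z ^ q := by
    intro z
    rcases eq_or_ne z 0 with rfl | hz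
    · simp [hq.ne']
    · have hfac : ∀ j, (1 : ℂ) + ω ^ j * z = (-z) * ((-z⁻¹) - ω ^ j) := by
        intro j
        field_simp
        ring
      calc ∏ j ∈ Finset.range q, (1 + ω ^ j * z)
          = ∏ j ∈ Finset.range q, ((-z) * ((-z⁻¹) - ω ^ j)) := by
            exact Finset.prod_congr rfl fun j _ => hfac j
        _ = (-z) ^ q * ∏ j ∈ Finset.range q, ((-z⁻¹) - ω ^ j) := by
            rw [Finset.prod_mul_distrib, Finset.prod_const, Finset.card_range]
        _ = (-z) ^ q * ((-z⁻¹) ^ q - 1) := by rw [← heval]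
        _ = 1 - (-1 : ℂ) ^ q * z ^ q := by
            rw [mul_sub, ← mul_pow]
            field_simp
            ring
  apply Polynomial.funext
  intro z
  simp only [Polynomial.eval_prod, Polynomial.eval_add, Polynomial.eval_one,
    Polynomial.eval_mul, Polynomial.eval_C, Polynomial.eval_X, Polynomial.eval_sub,
    Polynomial.eval_pow]
  exact hfun z

-- coefficient of the power
lemma aux_coeff_pow (d q k : ℕ) (hq : 0 < q) (hk : k ≤ q * d) :
    ((1 - Polynomial.C ((-1 : ℂ) ^ q) * Polynomial.X ^ q) ^ d).coeff k
      = if q ∣ k then ((-1 : ℂ) ^ (k + k / q) * (d.choose (k / q) : ℂ)) else 0 := by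
  have h1 : (1 - Polynomial.C ((-1 : ℂ) ^ q) * Polynomial.X ^ q)
      = (Polynomial.C (-(-1 : ℂ) ^ q) * Polynomial.X ^ q + 1) := by
    rw [map_neg]; ring
  rw [h1, add_pow, Polynomial.finset_sum_coeff]
  have hterm : ∀ j, ((Polynomial.C (-(-1 : ℂ) ^ q) * Polynomial.X ^ q) ^ j * 1 ^ (d - j)
        * (d.choose j : ℂ[X])).coeff k
      = if k = q * j then (-(-1 : ℂ) ^ q) ^ j * (d.choose j : ℂ) else 0 := by
    intro j
    have he : (Polynomial.C (-(-1 : ℂ) ^ q) * Polynomial.X ^ q) ^ j * 1 ^ (d - j)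
        * (d.choose j : ℂ[X])
        = Polynomial.C ((-(-1 : ℂ) ^ q) ^ j * (d.choose j : ℂ)) * Polynomial.X ^ (q * j) := by
      rw [← Polynomial.C_eq_natCast, one_pow, mul_one, mul_pow, ← Polynomial.C_pow,
        ← pow_mul, map_mul]
      ring
    rw [he, Polynomial.coeff_C_mul, Polynomial.coeff_X_pow]
    split <;> simp
  rw [Finset.sum_congr rfl (fun j _ => hterm j)]
  by_cases hdvd : q ∣ k
  · set j0 := k / q with hj0def
    have hkj : q * j0 = k := Nat.mul_div_cancel' hdvd
    have hj0le : j0 ≤ d := by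
      have := Nat.div_le_div_right (c := q) hk
      rwa [Nat.mul_div_cancel_left d hq] at this
    rw [Finset.sum_eq_single_of_mem j0 (Finset.mem_range.mpr (Nat.lt_succ_of_le hj0le))]
    · rw [if_pos hkj.symm, if_pos hdvd]
      congr 1
      have hsign : (-(-1 : ℂ) ^ q) = (-1 : ℂ) ^ (q + 1) := by ring
      rw [hsign, ← pow_mul]
      congr 1
      rw [Nat.add_mul, one_mul, hkj]
    · intro j _ hj
      rw [if_neg]
      intro hkeq
      apply hj
      rw [hj0def, hkeq, Nat.mul_div_cancel_left j hq]
  · rw [if_neg hdvd]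
    apply Finset.sum_eq_zero
    intro j _
    rw [if_neg]
    intro hkeq
    exact hdvd ⟨j, hkeq⟩

-- grouping injective tuples by their image
lemma aux_sum_injective {β : Type*} [Fintype β] [DecidableEq β] (k : ℕ) (f : β → ℂ) :
    ∑ x ∈ Finset.univ.filter (fun x : Fin k → β => Function.Injective x), ∏ i, f (x i)
      = (k.factorial : ℂ) *
        ∑ s ∈ Finset.powersetCard k (Finset.univ : Finset β), ∏ a ∈ s, f a := by
  classical
  have hmaps : ∀ x ∈ Finset.univ.filter (fun x : Fin k → β => Function.Injective x),
      Finset.image x Finset.univ ∈ Finset.powersetCard k (Finset.univ : Finset β) := by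
    intro x hx
    rw [Finset.mem_filter] at hx
    rw [Finset.mem_powersetCard]
    exact ⟨Finset.subset_univ _, by
      rw [Finset.card_image_of_injective _ hx.2]; simp⟩
  rw [← Finset.sum_fiberwise_of_maps_to hmaps (fun x => ∏ i, f (x i)), Finset.mul_sum]
  refine Finset.sum_congr rfl fun s hs => ?_
  rw [Finset.mem_powersetCard] at hs
  have hcongr : ∀ x ∈ (Finset.univ.filter
        (fun x : Fin k → β => Function.Injective x)).filter
        (fun x => Finset.image x Finset.univ = s),
      ∏ i, f (x i) = ∏ a ∈ s, f a := by
    intro x hx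
    rw [Finset.mem_filter, Finset.mem_filter] at hx
    rw [← hx.2, Finset.prod_image (fun i _ j _ h => hx.1.2 h)]
  rw [Finset.sum_congr rfl hcongr, Finset.sum_const, nsmul_eq_mul]
  congr 1
  have hfilter : (Finset.univ.filter
        (fun x : Fin k → β => Function.Injective x)).filter
        (fun x => Finset.image x Finset.univ = s)
      = Finset.univ.filter
        (fun x : Fin k → β => Function.Injective x ∧ Finset.image x Finset.univ = s) := by
    rw [Finset.filter_filter]
  rw [hfilter]
  rw [← Fintype.card_subtype]
  have e : {x : Fin k → β // Function.Injective x ∧ Finset.image x Finset.univ = s}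
      ≃ (Fin k ↪ {a // a ∈ s}) :=
    { toFun := fun x => ⟨fun i => ⟨x.1 i, by
        have h := Finset.mem_image_of_mem x.1 (Finset.mem_univ i)
        rwa [x.2.2] at h⟩,
        fun i j h => x.2.1 (congrArg Subtype.val h)⟩
      invFun := fun g => ⟨fun i => (g i : β), by
        have hginj : Function.Injective (fun i => ((g i : β))) :=
          fun i j h => g.injective (Subtype.ext h)
        refine ⟨hginj, Finset.eq_of_subset_of_card_le ?_ ?_⟩
        · intro a ha
          obtain ⟨i, _, rfl⟩ := Finset.mem_image.mp ha
          exact (g i).2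
        · rw [hs.2, Finset.card_image_of_injective _ hginj]
          simp⟩
      left_inv := fun x => by ext i; rfl
      right_inv := fun g => by ext i; rfl }
  rw [Fintype.card_congr e, Fintype.card_embedding_eq]
  simp [Fintype.card_coe, hs.2, Nat.descFactorial_self]

/-- The discrete Fourier transform of `b ↦ N_n(k,b)`:
`∑_{b=1}^{n} N_n(k,b) · exp(2πi·bm/n)` equals `(−1)^{k + kd/n} · k! · C(d, kd/n)` when
`n ∣ kd` (with `d = gcd(m,n)`), and `0` otherwise, where `N_n(k,b)` counts tuples in
`(ℤ/nℤ)^k` with pairwise distinct coordinates summing to `b`. -/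
theorem dft_count_distinct_solutions (n : ℕ) (hn : 0 < n) (k : ℕ) (hk : k ≤ n) (m : ℕ) :
    (∑ b ∈ Finset.Icc 1 n,
        (Nat.card {x : Fin k → ZMod n //
            (∑ i, x i) = (b : ZMod n) ∧ Function.Injective x} : ℂ) *
          Complex.exp (2 * Real.pi * Complex.I * (b : ℂ) * (m : ℂ) / (n : ℂ))) =
      if n ∣ k * Nat.gcd m n then
        (-1 : ℂ) ^ (k + k * Nat.gcd m n / n) * (Nat.factorial k : ℂ) *
          ((Nat.gcd m n).choose (k * Nat.gcd m n / n) : ℂ)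
      else 0 := by
  classical
  haveI : NeZero n := ⟨hn.ne'⟩
  set d := Nat.gcd m n with hdd
  have hd : 0 < d := Nat.gcd_pos_of_pos_right m hn
  set q := n / d with hqdef
  have hqd : q * d = n := Nat.div_mul_cancel (Nat.gcd_dvd_right m n)
  have hq : 0 < q := Nat.div_pos (Nat.le_of_dvd hn (Nat.gcd_dvd_right m n)) hd
  set ζ := Complex.exp (2 * Real.pi * Complex.I / n) with hζdef
  have hζ : IsPrimitiveRoot ζ n := Complex.isPrimitiveRoot_exp n hn.ne'
  set ω := ζ ^ m with hωdef
  have hnd : n = d * q := (Nat.mul_div_cancel' (Nat.gcd_dvd_right m n)).symm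
  have hζd : IsPrimitiveRoot (ζ ^ d) q := hζ.pow hn hnd
  have hcop : Nat.Coprime (m / d) q := Nat.coprime_div_gcd_div_gcd hd
  have hω : IsPrimitiveRoot ω q := by
    have h1 : ω = (ζ ^ d) ^ (m / d) := by
      rw [hωdef, ← pow_mul, Nat.mul_div_cancel' (Nat.gcd_dvd_left m n)]
    rw [h1]
    exact hζd.pow_of_coprime _ hcop
  have hωq : ω ^ q = 1 := hω.pow_eq_one
  have hζmod : ∀ a b : ℕ, a % n = b % n → ζ ^ a = ζ ^ b := by
    have h1 : ∀ t : ℕ, ζ ^ t = ζ ^ (t % n) := by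
      intro t
      conv_lhs => rw [← Nat.div_add_mod t n]
      rw [pow_add, pow_mul, hζ.pow_eq_one, one_pow, one_mul]
    intro a b hab
    rw [h1 a, h1 b, hab]
  set χ : ZMod n → ℂ := fun c => ω ^ c.val with hχdef
  set N' : ZMod n → ℕ := fun c =>
    (Finset.univ.filter (fun x : Fin k → ZMod n =>
      (∑ i, x i) = c ∧ Function.Injective x)).card with hN'def
  -- Step 1: reindex the sum over `Icc 1 n` as a sum over `ZMod n`
  have hexp : ∀ b : ℕ,
      Complex.exp (2 * Real.pi * Complex.I * (b : ℂ) * (m : ℂ) / (n : ℂ)) = ζ ^ (b * m) := by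
    intro b
    rw [hζdef, show (Complex.exp (2 * Real.pi * Complex.I / n)) ^ (b * m)
      = Complex.exp (((b * m : ℕ) : ℂ) * (2 * Real.pi * Complex.I / n)) from
        (Complex.exp_nat_mul _ _).symm]
    congr 1
    push_cast
    ring
  have hval : ∀ b : ℕ, ζ ^ (b * m) = χ ((b : ZMod n)) := by
    intro b
    rw [hχdef]
    show ζ ^ (b * m) = ω ^ (((b : ZMod n)).val)
    rw [hωdef, ← pow_mul]
    apply hζmod
    rw [ZMod.val_natCast]
    have h2 : ((b % n) * m) % n = (b * m) % n := (Nat.mod_modEq b n).mul_right m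
    rw [mul_comm m (b % n)]
    exact h2.symm
  have hstep1 : (∑ b ∈ Finset.Icc 1 n,
        (Nat.card {x : Fin k → ZMod n //
            (∑ i, x i) = (b : ZMod n) ∧ Function.Injective x} : ℂ) *
          Complex.exp (2 * Real.pi * Complex.I * (b : ℂ) * (m : ℂ) / (n : ℂ)))
      = ∑ c : ZMod n, (N' c : ℂ) * χ c := by
    refine Finset.sum_nbij' (i := fun b => ((b : ℕ) : ZMod n))
      (j := fun c : ZMod n => if c.val = 0 then n else c.val) ?_ ?_ ?_ ?_ ?_
    · intro b _; exact Finset.mem_univ _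
    · intro c _
      rcases eq_or_ne c.val 0 with h | h
      · simp only [h, if_pos rfl]
        exact Finset.mem_Icc.mpr ⟨hn, le_refl n⟩
      · simp only [if_neg h]
        exact Finset.mem_Icc.mpr ⟨Nat.one_le_iff_ne_zero.mpr h, (ZMod.val_lt c).le⟩
    · intro b hb
      rw [Finset.mem_Icc] at hb
      show (if ((b : ZMod n)).val = 0 then n else ((b : ZMod n)).val) = b
      rw [ZMod.val_natCast]
      rcases eq_or_ne b n with rfl | hbn
      · simp
      · have hblt : b < n := lt_of_le_of_ne hb.2 hbn
        rw [Nat.mod_eq_of_lt hblt, if_neg (by omega)]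
    · intro c _
      rcases eq_or_ne c.val 0 with h | h
      · simp only [h, if_pos rfl]
        rw [ZMod.natCast_self]
        exact ((ZMod.val_eq_zero c).mp h).symm
      · simp only [if_neg h]
        exact ZMod.natCast_rightInverse c
    · intro b _
      rw [hexp b, hval b]
      congr 2
      rw [Nat.card_eq_fintype_card, Fintype.card_subtype]
  -- Step 2: fiberwise summation
  have hstep2 : ∑ c : ZMod n, (N' c : ℂ) * χ c
      = ∑ x ∈ Finset.univ.filter (fun x : Fin k → ZMod n => Function.Injective x),
          χ (∑ i, x i) := by
    rw [← Finset.sum_fiberwise (Finset.univ.filter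
        (fun x : Fin k → ZMod n => Function.Injective x))
        (fun x => ∑ i, x i) (fun x => χ (∑ i, x i))]
    refine Finset.sum_congr rfl fun c _ => ?_
    have hc : ∀ x ∈ (Finset.univ.filter
          (fun x : Fin k → ZMod n => Function.Injective x)).filter
          (fun x => (∑ i, x i) = c),
        χ (∑ i, x i) = χ c := by
      intro x hx
      rw [(Finset.mem_filter.mp hx).2]
    have hset : Finset.univ.filter
          (fun x : Fin k → ZMod n => Function.Injective x ∧ (∑ i, x i) = c)
        = Finset.univ.filter
          (fun x : Fin k → ZMod n => (∑ i, x i) = c ∧ Function.Injective x) := by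
      ext x; simp [and_comm]
    rw [Finset.sum_congr rfl hc, Finset.sum_const, nsmul_eq_mul, Finset.filter_filter, hset]
  -- Step 3: χ of a sum is a product
  have hchi_zero : χ 0 = 1 := by rw [hχdef]; show ω ^ (0 : ZMod n).val = 1; simp
  have hchi_add : ∀ a b : ZMod n, χ (a + b) = χ a * χ b := by
    intro a b
    show ω ^ (a + b).val = ω ^ a.val * ω ^ b.val
    rw [← pow_add, hωdef, ← pow_mul, ← pow_mul]
    apply hζmod
    rw [ZMod.val_add]
    have h2 : (((a.val + b.val) % n) * m) % n = ((a.val + b.val) * m) % n :=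
      (Nat.mod_modEq (a.val + b.val) n).mul_right m
    rw [mul_comm m _, mul_comm m _]
    exact h2.trans rfl
  have hchi_sum : ∀ x : Fin k → ZMod n, χ (∑ i, x i) = ∏ i, χ (x i) := by
    intro x
    induction (Finset.univ : Finset (Fin k)) using Finset.cons_induction with
    | empty => simpa using hchi_zero
    | cons a s ha ih => rw [Finset.sum_cons, Finset.prod_cons, hchi_add, ih]
  have hstep3 : ∑ x ∈ Finset.univ.filter (fun x : Fin k → ZMod n => Function.Injective x),
        χ (∑ i, x i)
      = (k.factorial : ℂ) *
        ∑ s ∈ Finset.powersetCard k (Finset.univ : Finset (ZMod n)), ∏ a ∈ s, χ a := by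
    rw [Finset.sum_congr rfl (fun x _ => hchi_sum x)]
    exact aux_sum_injective k χ
  -- Step 4: polynomial coefficient identity
  have hstep4 : ∑ s ∈ Finset.powersetCard k (Finset.univ : Finset (ZMod n)), ∏ a ∈ s, χ a
      = ((1 - Polynomial.C ((-1 : ℂ) ^ q) * Polynomial.X ^ q) ^ d).coeff k := by
    rw [← aux_coeff_prod_one_add Finset.univ χ k]
    congr 1
    have hre : ∏ a : ZMod n, (1 + Polynomial.C (χ a) * Polynomial.X)
        = ∏ j ∈ Finset.range n, (1 + Polynomial.C (ω ^ j) * Polynomial.X) := by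
      refine Finset.prod_nbij' (i := fun a : ZMod n => a.val)
        (j := fun j : ℕ => (j : ZMod n)) ?_ ?_ ?_ ?_ ?_
      · intro a _; exact Finset.mem_range.mpr (ZMod.val_lt a)
      · intro j _; exact Finset.mem_univ _
      · intro a _; exact ZMod.natCast_rightInverse a
      · intro j hj; exact ZMod.val_natCast_of_lt (Finset.mem_range.mp hj)
      · intro a _; rfl
    rw [hre, ← hqd, aux_periodic_prod _ q d (fun j => by rw [pow_add, hωq, mul_one]),
      aux_prod_primroot q hq ω hω]
  rw [hstep1, hstep2, hstep3, hstep4,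
    aux_coeff_pow d q k hq (by rw [hqd]; exact hk)]
  have hdvd_iff : n ∣ k * d ↔ q ∣ k := by
    rw [← hqd]
    exact Nat.mul_dvd_mul_iff_right hd
  have hdiv_eq : k * d / n = k / q := by
    rw [← hqd, Nat.mul_div_mul_right k q hd]
  by_cases h : q ∣ k
  · rw [if_pos h, if_pos (hdvd_iff.mpr h), hdiv_eq]
    ring
  · rw [if_neg h, if_neg (fun hh => h (hdvd_iff.mp hh)), mul_zero]
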